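/- Fix m > 6. Then there exists ε₁ > 0 such that for every ε ∈ (0,ε₁) the equation D_ε(λ;m) = 0 admits a solution λ ∈ ℂ ∖ (−∞,−1/4] with Re λ > 0. -/

import Mathlib

/-!
Rationalising `ε⁻¹ (√(1 + 4ε(m + εm² + λ)) - 1)` extends `D_ε` to a function of `(ε, λ)` that is
continuous at `ε = 0` and holomorphic in `λ`. Writing `S = √(1 + 4λ)`, the limit is
`D_0 = (S - 1)(S² - (m - 2)S + m + 1) / (4(1 + m))`; the root `S₊ = (m - 2 + √(m² - 8m)) / 2`
has positive real part, so `λ₀ = (S₊² - 1) / 4` is a zero of `D_0`, and `Re λ₀ ≥ m(m - 6)/8 > 0`.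
Since `D_0` has finitely many zeros, some circle around `λ₀` inside the right half-plane avoids
them; by the maximum modulus principle applied to `1 / D_ε`, `D_ε` still vanishes inside that
circle for all small `ε`.
-/

open Complex

/-- Principal branch of the complex square root. -/
noncomputable def csqrt (z : ℂ) : ℂ := z ^ (1/2 : ℂ)

/-- The dispersion relation D_ε(λ;m). -/
noncomputable def dispersion (ε m : ℝ) (l : ℂ) : ℂ :=
  -(1/4) * (csqrt (1 + 4 * ε * (m + ε * m ^ 2 + l)) + csqrt (1 + 4 * ε * l)) *
    ((ε : ℂ)⁻¹ * (csqrt (1 + 4 * ε * (m + ε * m ^ 2 + l)) - 1) + 1 + csqrt (1 + 4 * l)) *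
    (1 - csqrt (1 + 4 * l) / (1 + m)) + m + ε * m ^ 2

open Filter Metric Set Topology

@[simp]
lemma csqrt_one : csqrt 1 = 1 := by simp [csqrt]

lemma csqrt_sq (z : ℂ) : csqrt z ^ 2 = z := by
  simp [csqrt, one_div]

lemma re_csqrt_nonneg (z : ℂ) : 0 ≤ (csqrt z).re := by
  rcases eq_or_ne z 0 with rfl | hz
  · simp [csqrt]
  have him : (log z * (1 / 2)).im = arg z / 2 := by simp [log_im, div_eq_mul_inv]
  rw [csqrt, cpow_def_of_ne_zero hz, exp_re, him]
  refine mul_nonneg (Real.exp_nonneg _) (Real.cos_nonneg_of_mem_Icc ⟨?_, ?_⟩) <;>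
    linarith [neg_pi_lt_arg z, arg_le_pi z]

lemma csqrt_add_one_ne_zero (z : ℂ) : csqrt z + 1 ≠ 0 := fun h => by
  have := congrArg re h
  simp only [add_re, one_re, zero_re] at this
  linarith [re_csqrt_nonneg z]

lemma csqrt_eq_of_sq_eq {s z : ℂ} (h : s ^ 2 = z) (hs : 0 < s.re) : csqrt z = s := by
  have : (csqrt z - s) * (csqrt z + s) = 0 := by linear_combination csqrt_sq z - h
  rcases mul_eq_zero.1 this with h' | h'
  · exact sub_eq_zero.1 h'
  · have := congrArg re h'
    simp only [add_re, zero_re] at this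
    linarith [re_csqrt_nonneg z]

@[fun_prop]
lemma ContinuousAt.csqrt {X : Type*} [TopologicalSpace X] {f : X → ℂ} {x : X}
    (hf : ContinuousAt f x) (hx : f x ∈ slitPlane) : ContinuousAt (fun y => csqrt (f y)) x :=
  hf.cpow continuousAt_const hx

@[fun_prop]
lemma DifferentiableAt.csqrt {f : ℂ → ℂ} {z : ℂ} (hf : DifferentiableAt ℂ f z)
    (hz : f z ∈ slitPlane) : DifferentiableAt ℂ (fun w => csqrt (f w)) z :=
  hf.cpow (differentiableAt_const _) hz

lemma exists_mem_ball_eq_zero_of_norm_lt {f : ℂ → ℂ} {c : ℂ} {r δ : ℝ} (hr : 0 < r)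
    (hf : DifferentiableOn ℂ f (closedBall c r)) (hc : ‖f c‖ < δ)
    (hsphere : ∀ z ∈ sphere c r, δ ≤ ‖f z‖) : ∃ z ∈ ball c r, f z = 0 := by
  by_contra! hne
  have hne' : ∀ z ∈ closedBall c r, f z ≠ 0 := by
    intro z hz
    rcases (mem_closedBall.1 hz).lt_or_eq with hz | hz
    · exact hne z (mem_ball.2 hz)
    · exact norm_pos_iff.1 ((norm_nonneg _).trans_lt hc |>.trans_le (hsphere z hz))
  have hδ : 0 < δ := (norm_nonneg _).trans_lt hc
  have hinv : DiffContOnCl ℂ (fun z => (f z)⁻¹) (ball c r) := by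
    refine DifferentiableOn.diffContOnCl ?_
    rw [closure_ball c hr.ne']
    exact hf.inv hne'
  have hbound := norm_le_of_forall_mem_frontier_norm_le isBounded_ball hinv
    (C := δ⁻¹) (fun z hz => by
      rw [frontier_ball c hr.ne'] at hz
      rw [norm_inv]
      exact inv_anti₀ hδ (hsphere z hz))
    (subset_closure (mem_ball_self hr))
  rw [norm_inv] at hbound
  have := (inv_le_inv₀ (norm_pos_iff.2 (hne' c (mem_closedBall_self hr.le))) hδ).1 hbound
  linarith

theorem eventually_exists_mem_ball_eq_zero {X : Type*} [TopologicalSpace X] {F : X → ℂ → ℂ}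
    {x₀ : X} {c : ℂ} {r : ℝ} (hr : 0 < r)
    (hcont : ∀ z ∈ closedBall c r, ContinuousAt (fun p : X × ℂ => F p.1 p.2) (x₀, z))
    (hdiff : ∀ z ∈ closedBall c r, ∀ᶠ p in 𝓝 (x₀, z), DifferentiableAt ℂ (F p.1) p.2)
    (hzero : F x₀ c = 0) (hsphere : ∀ z ∈ sphere c r, F x₀ z ≠ 0) :
    ∀ᶠ x in 𝓝 x₀, ∃ z ∈ ball c r, F x z = 0 := by
  have hcont₀ : ∀ z ∈ closedBall c r, ContinuousAt (fun w => F x₀ w) z := fun z hz =>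
    (hcont z hz).comp (f := fun w => (x₀, w)) (by fun_prop)
  obtain ⟨w, hw, hmin⟩ := (isCompact_sphere c r).exists_isMinOn
    (NormedSpace.sphere_nonempty.2 hr.le)
    (fun z hz => (hcont₀ z (sphere_subset_closedBall hz)).norm.continuousWithinAt)
  set δ := ‖F x₀ w‖
  have hδ : 0 < δ := norm_pos_iff.2 (hsphere w hw)
  have hclose : ∀ z ∈ closedBall c r, ∀ᶠ p in 𝓝 (x₀, z),
      ‖F p.1 p.2 - F x₀ p.2‖ < δ / 2 ∧ DifferentiableAt ℂ (F p.1) p.2 := by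
    intro z hz
    have hlim : Tendsto (fun p : X × ℂ => F p.1 p.2 - F x₀ p.2) (𝓝 (x₀, z)) (𝓝 0) := by
      have : ContinuousAt (fun p : X × ℂ => F p.1 p.2 - F x₀ p.2) (x₀, z) :=
        (hcont z hz).sub ((hcont₀ z hz).comp (f := Prod.snd) continuousAt_snd)
      simpa using this.tendsto
    exact (hlim.norm.eventually (gt_mem_nhds (by simpa using half_pos hδ))).and (hdiff z hz)
  filter_upwards [(isCompact_closedBall c r).eventually_forall_of_forall_eventually
    (P := fun x z => ‖F x z - F x₀ z‖ < δ / 2 ∧ DifferentiableAt ℂ (F x) z) hclose]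
    with x hx
  refine exists_mem_ball_eq_zero_of_norm_lt hr (fun z hz => (hx z hz).2.differentiableWithinAt)
    (δ := δ / 2) ?_ fun z hz => ?_
  · simpa [hzero] using (hx c (mem_closedBall_self hr.le)).1
  · have h₁ := (hx z (sphere_subset_closedBall hz)).1
    have h₂ : δ ≤ ‖F x₀ z‖ := hmin hz
    have := norm_sub_norm_le (F x₀ z) (F x z)
    rw [norm_sub_rev] at this
    linarith

lemma exists_radius_forall_dist_ne {s : Set ℂ} (hs : s.Finite) (c : ℂ) {R : ℝ} (hR : 0 < R) :
    ∃ r ∈ Ioo 0 R, ∀ z ∈ s, dist z c ≠ r := by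
  obtain ⟨r, hr, hrs⟩ := (Ioo_infinite hR).exists_notMem_finite (hs.image (dist · c))
  exact ⟨r, hr, fun z hz h => hrs ⟨z, hz, h⟩⟩

lemma re_pos_of_mem_closedBall {c z : ℂ} {r : ℝ} (hr : r < c.re) (hz : z ∈ closedBall c r) :
    0 < z.re := by
  have := (abs_re_le_norm (z - c)).trans (mem_closedBall_iff_norm.1 hz)
  rw [sub_re, abs_le] at this
  linarith

/-- Rationalising `ε⁻¹ (√(1 + 4εμ) - 1) = 4μ / (√(1 + 4εμ) + 1)` extends `D_ε` to `ε = 0`. -/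
noncomputable def dispersionExt (ε m : ℝ) (l : ℂ) : ℂ :=
  -(1/4) * (csqrt (1 + 4 * ε * (m + ε * m ^ 2 + l)) + csqrt (1 + 4 * ε * l)) *
    (4 * (m + ε * m ^ 2 + l) / (csqrt (1 + 4 * ε * (m + ε * m ^ 2 + l)) + 1)
      + 1 + csqrt (1 + 4 * l)) *
    (1 - csqrt (1 + 4 * l) / (1 + m)) + m + ε * m ^ 2

lemma dispersion_eq_dispersionExt {ε : ℝ} (hε : ε ≠ 0) (m : ℝ) (l : ℂ) :
    dispersion ε m l = dispersionExt ε m l := by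
  set μ : ℂ := m + ε * m ^ 2 + l
  have hrat : (ε : ℂ)⁻¹ * (csqrt (1 + 4 * ε * μ) - 1) = 4 * μ / (csqrt (1 + 4 * ε * μ) + 1) := by
    rw [eq_div_iff (csqrt_add_one_ne_zero _), mul_assoc,
      inv_mul_eq_iff_eq_mul₀ (by exact_mod_cast hε)]
    linear_combination csqrt_sq (1 + 4 * ε * μ)
  rw [dispersion, dispersionExt, hrat]

lemma dispersionExt_zero {m : ℝ} (hm : (1 + m : ℂ) ≠ 0) (l : ℂ) :
    dispersionExt 0 m l = (csqrt (1 + 4 * l) - 1) *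
      (csqrt (1 + 4 * l) ^ 2 - (m - 2) * csqrt (1 + 4 * l) + (m + 1)) / (4 * (1 + m)) := by
  have hS := csqrt_sq (1 + 4 * l)
  simp only [dispersionExt, ofReal_zero, mul_zero, zero_mul, add_zero, csqrt_one]
  field_simp
  linear_combination (m + 1 - csqrt (1 + 4 * l)) * hS

def dispersionDomain (m : ℝ) : Set (ℝ × ℂ) :=
  {p | 1 + 4 * p.1 * (m + p.1 * m ^ 2 + p.2) ∈ slitPlane ∧ 1 + 4 * p.1 * p.2 ∈ slitPlane ∧
    1 + 4 * p.2 ∈ slitPlane}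

lemma isOpen_dispersionDomain (m : ℝ) : IsOpen (dispersionDomain m) :=
  (isOpen_slitPlane.preimage (by fun_prop)).inter <|
    (isOpen_slitPlane.preimage (by fun_prop)).inter (isOpen_slitPlane.preimage (by fun_prop))

lemma zero_mk_mem_dispersionDomain (m : ℝ) {l : ℂ} (hl : 0 < l.re) :
    ((0 : ℝ), l) ∈ dispersionDomain m := by
  refine ⟨by simp, by simp, mem_slitPlane_iff.2 (Or.inl ?_)⟩
  simp only [add_re, one_re, mul_re, re_ofNat, im_ofNat, zero_mul, sub_zero]
  linarith

lemma continuousAt_dispersionExt {m : ℝ} {p : ℝ × ℂ}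
    (hp : p ∈ dispersionDomain m) : ContinuousAt (fun q : ℝ × ℂ => dispersionExt q.1 m q.2) p := by
  obtain ⟨h₁, h₂, h₃⟩ := hp
  have := csqrt_add_one_ne_zero (1 + 4 * p.1 * (m + p.1 * m ^ 2 + p.2))
  unfold dispersionExt
  fun_prop (disch := assumption)

lemma differentiableAt_dispersionExt {m ε : ℝ} {l : ℂ}
    (hp : (ε, l) ∈ dispersionDomain m) : DifferentiableAt ℂ (dispersionExt ε m) l := by
  obtain ⟨h₁, h₂, h₃⟩ := hp
  have := csqrt_add_one_ne_zero (1 + 4 * ε * (m + ε * m ^ 2 + l))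
  unfold dispersionExt
  fun_prop (disch := assumption)

noncomputable def sqrtRoot₀ (m : ℝ) : ℂ := (m - 2 + csqrt (m ^ 2 - 8 * m)) / 2

noncomputable def root₀ (m : ℝ) : ℂ := (sqrtRoot₀ m ^ 2 - 1) / 4

lemma sqrtRoot₀_sq_sub_mul_add_eq_zero (m : ℝ) :
    sqrtRoot₀ m ^ 2 - (m - 2) * sqrtRoot₀ m + (m + 1) = 0 := by
  rw [sqrtRoot₀]
  linear_combination (1 / 4 : ℂ) * csqrt_sq ((m : ℂ) ^ 2 - 8 * m)

lemma re_sqrtRoot₀_pos {m : ℝ} (hm : 2 < m) : 0 < (sqrtRoot₀ m).re := by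
  have := re_csqrt_nonneg ((m : ℂ) ^ 2 - 8 * m)
  simp only [sqrtRoot₀, div_ofNat_re, add_re, sub_re, ofReal_re, re_ofNat]
  linarith

lemma re_root₀_pos {m : ℝ} (hm : 6 < m) : 0 < (root₀ m).re := by
  have hσ := re_csqrt_nonneg ((m : ℂ) ^ 2 - 8 * m)
  have h16 : ((16 : ℝ) : ℂ) * root₀ m =
      ((2 * m * (m - 6) : ℝ) : ℂ) + ((2 * (m - 2) : ℝ) : ℂ) * csqrt (m ^ 2 - 8 * m) := by
    rw [root₀, sqrtRoot₀]
    push_cast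
    linear_combination csqrt_sq ((m : ℂ) ^ 2 - 8 * m)
  have := congrArg re h16
  simp only [add_re, re_ofReal_mul, ofReal_re] at this
  nlinarith [mul_nonneg (by linarith : (0 : ℝ) ≤ m - 2) hσ]

lemma csqrt_one_add_four_mul_root₀ {m : ℝ} (hm : 2 < m) :
    csqrt (1 + 4 * root₀ m) = sqrtRoot₀ m :=
  csqrt_eq_of_sq_eq (by rw [root₀]; ring) (re_sqrtRoot₀_pos hm)

lemma dispersionExt_zero_root₀ {m : ℝ} (hm : 2 < m) : dispersionExt 0 m (root₀ m) = 0 := by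
  rw [dispersionExt_zero (by exact_mod_cast (by linarith : (1 + m) ≠ 0)),
    csqrt_one_add_four_mul_root₀ hm, sqrtRoot₀_sq_sub_mul_add_eq_zero, mul_zero, zero_div]

lemma finite_setOf_dispersionExt_zero_eq_zero {m : ℝ} (hm : (1 + m : ℂ) ≠ 0) :
    {l | dispersionExt 0 m l = 0}.Finite := by
  refine (Set.toFinite ({1, sqrtRoot₀ m, m - 2 - sqrtRoot₀ m} : Set ℂ)).image
    (fun S => (S ^ 2 - 1) / 4) |>.subset fun l hl => ?_
  have hfactor : (csqrt (1 + 4 * l) - 1) * ((csqrt (1 + 4 * l) - sqrtRoot₀ m) *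
      (csqrt (1 + 4 * l) - (m - 2 - sqrtRoot₀ m))) = 0 := by
    rw [mem_ofPred_eq, dispersionExt_zero hm, div_eq_zero_iff] at hl
    linear_combination hl.resolve_right (mul_ne_zero (by norm_num) hm) -
      (csqrt (1 + 4 * l) - 1) * sqrtRoot₀_sq_sub_mul_add_eq_zero m
  refine ⟨csqrt (1 + 4 * l), ?_, by simp only [csqrt_sq]; ring⟩
  simp only [mul_eq_zero, sub_eq_zero] at hfactor
  rcases hfactor with h | h | h <;> simp [h]

/-- for fixed m > 6, there exists ε₁ > 0 such that for each
ε ∈ (0,ε₁) the dispersion relation D_ε(·;m) admits a root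
λ ∈ ℂ ∖ (−∞,−1/4] with positive real part. -/
theorem unstable_root_exists (m : ℝ) (hm : 6 < m) :
    ∃ ε₁ > (0:ℝ), ∀ ε ∈ Set.Ioo (0:ℝ) ε₁,
      ∃ l : ℂ, ¬(l.im = 0 ∧ l.re ≤ -(1/4)) ∧ dispersion ε m l = 0 ∧ 0 < l.re := by
  have hm₁ : (1 + m : ℂ) ≠ 0 := by exact_mod_cast (by linarith : (1 + m) ≠ 0)
  obtain ⟨r, ⟨hr₀, hr⟩, hsphere⟩ := exists_radius_forall_dist_ne
    (finite_setOf_dispersionExt_zero_eq_zero hm₁) (root₀ m) (re_root₀_pos hm)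
  have hdomain : ∀ z ∈ closedBall (root₀ m) r, ((0 : ℝ), z) ∈ dispersionDomain m :=
    fun z hz => zero_mk_mem_dispersionDomain m (re_pos_of_mem_closedBall hr hz)
  have hzeros : ∀ᶠ ε in 𝓝 (0 : ℝ), ∃ z ∈ ball (root₀ m) r, dispersionExt ε m z = 0 :=
    eventually_exists_mem_ball_eq_zero (F := fun ε => dispersionExt ε m) hr₀
      (fun z hz => continuousAt_dispersionExt (hdomain z hz))
      (fun z hz => eventually_of_mem ((isOpen_dispersionDomain m).mem_nhds (hdomain z hz))
        fun _ hp => differentiableAt_dispersionExt hp)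
      (dispersionExt_zero_root₀ (by linarith)) (fun z hz h => hsphere z h (mem_sphere.1 hz))
  obtain ⟨ε₁, hε₁, hε⟩ := Metric.eventually_nhds_iff.1 hzeros
  refine ⟨ε₁, hε₁, fun ε ⟨hε₀, hεε₁⟩ => ?_⟩
  obtain ⟨l, hl, hzero⟩ := hε (by rwa [Real.dist_0_eq_abs, abs_of_pos hε₀])
  have hre := re_pos_of_mem_closedBall hr (ball_subset_closedBall hl)
  exact ⟨l, fun h => by linarith [h.2], by rwa [dispersion_eq_dispersionExt hε₀.ne'], hre⟩
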